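/- arXiv:2010.03402 — 3 statements merged into one kernel-verified Lean document; each statement's English description precedes it below -/
import Mathlib

section
/- (Cone condition) Let q ∈ (1,∞), x ∈ R^N be nonzero and k-sparse with support S, and suppose ‖x+h‖₁ · ‖x‖_q ≤ ‖x‖₁ · ‖x+h‖_q for some h ∈ R^N. Then ‖h_{Sᶜ}‖₁ ≤ ‖h_S‖₁ + s_q(x)^{1−1/q} ‖h‖_q, and consequently ‖h‖₁ ≤ 3 k^{1−1/q} ‖h‖_q, i.e., s_q(h) ≤ 3^{q/(q−1)} k when h ≠ 0. -/
open Finset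

/-- The `ℓ_q` quasi-norm `(∑ |z i|^q)^(1/q)` on `Fin N → ℝ`. -/
noncomputable def lqNorm {N : ℕ} (q : ℝ) (z : Fin N → ℝ) : ℝ :=
  (∑ i, |z i| ^ q) ^ (1 / q)

/-- The `ℓ_1` norm. -/
noncomputable def l1Norm {N : ℕ} (z : Fin N → ℝ) : ℝ := ∑ i, |z i|

/-- The `ℓ_2` norm. -/
noncomputable def l2Norm {N : ℕ} (z : Fin N → ℝ) : ℝ := Real.sqrt (∑ i, (z i) ^ 2)

/-- The `q`-ratio sparsity `s_q(z) = (‖z‖₁/‖z‖_q)^(q/(q-1))`. -/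
noncomputable def qSparsity {N : ℕ} (q : ℝ) (z : Fin N → ℝ) : ℝ :=
  (l1Norm z / lqNorm q z) ^ (q / (q - 1))

/-- Number of nonzero entries. -/
noncomputable def l0Norm {N : ℕ} (z : Fin N → ℝ) : ℕ :=
  (Finset.univ.filter fun i => z i ≠ 0).card

/-- Restriction of `z` to an index set `S` (zero outside `S`). -/
noncomputable def restr {N : ℕ} (z : Fin N → ℝ) (S : Finset (Fin N)) : Fin N → ℝ :=
  fun i => if i ∈ S then z i else 0

private lemma holder_aux {N : ℕ} {q : ℝ} (hq : 1 < q) (z : Fin N → ℝ) (T : Finset (Fin N)) :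
    ∑ i ∈ T, |z i| ≤ (T.card : ℝ) ^ (1 - 1/q) * (∑ i ∈ T, |z i| ^ q) ^ (1/q) := by
  have H := Real.inner_le_weight_mul_Lp_of_nonneg T hq.le (fun _ => (1:ℝ)) (fun i => |z i|)
    (fun _ => zero_le_one) (fun i => abs_nonneg _)
  simpa [one_div] using H

theorem cone_condition {N : ℕ} (q : ℝ) (hq : 1 < q) (k : ℝ)
    (x : Fin N → ℝ) (hx : x ≠ 0)
    (S : Finset (Fin N)) (hsupp : ∀ i, x i ≠ 0 → i ∈ S) (hcard : (S.card : ℝ) ≤ k)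
    (h : Fin N → ℝ)
    (hineq : l1Norm (x + h) * lqNorm q x ≤ l1Norm x * lqNorm q (x + h)) :
    l1Norm (restr h Sᶜ) ≤ l1Norm (restr h S) + (qSparsity q x) ^ (1 - 1 / q) * lqNorm q h ∧
    l1Norm h ≤ 3 * k ^ (1 - 1 / q) * lqNorm q h ∧
    (h ≠ 0 → qSparsity q h ≤ (3 : ℝ) ^ (q / (q - 1)) * k) := by
  have hq0 : (0:ℝ) < q := lt_trans one_pos hq
  have hq1 : (0:ℝ) < q - 1 := by linarith
  have hqi : (0:ℝ) < 1 / q := by positivity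
  have hexp : (0:ℝ) ≤ 1 - 1/q := by
    rw [sub_nonneg, div_le_one hq0]; linarith
  have hk0 : (0:ℝ) ≤ k := le_trans (Nat.cast_nonneg _) hcard
  obtain ⟨i0, hi0⟩ := Function.ne_iff.mp hx
  have hsumx : 0 < ∑ i, |x i| ^ q := by
    apply Finset.sum_pos' (fun i _ => Real.rpow_nonneg (abs_nonneg _) _)
    exact ⟨i0, Finset.mem_univ _, Real.rpow_pos_of_pos (abs_pos.mpr hi0) _⟩
  have hLx : 0 < lqNorm q x := Real.rpow_pos_of_pos hsumx _
  have hLh : 0 ≤ lqNorm q h :=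
    Real.rpow_nonneg (Finset.sum_nonneg fun i _ => Real.rpow_nonneg (abs_nonneg _) _) _
  -- restriction identities
  have hS : l1Norm (restr h S) = ∑ i ∈ S, |h i| := by
    simp [l1Norm, restr, apply_ite abs, abs_zero, Finset.sum_ite_mem, Finset.univ_inter]
  have hSc : l1Norm (restr h Sᶜ) = ∑ i ∈ Sᶜ, |h i| := by
    have habs : ∀ i, |restr h Sᶜ i| = if i ∈ Sᶜ then |h i| else 0 := by
      intro i; simp [restr, apply_ite abs]
    rw [l1Norm]
    simp_rw [habs, Finset.sum_ite_mem, Finset.univ_inter]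
  have hx1 : l1Norm x = ∑ i ∈ S, |x i| := by
    rw [l1Norm, ← Finset.sum_subset (Finset.subset_univ S)]
    intro i _ hiS
    have : x i = 0 := by by_contra hne; exact hiS (hsupp i hne)
    simp [this]
  set A := ∑ i ∈ S, |h i| with hA
  set B := ∑ i ∈ Sᶜ, |h i| with hB
  have hA0 : 0 ≤ A := Finset.sum_nonneg fun i _ => abs_nonneg _
  have hB0 : 0 ≤ B := Finset.sum_nonneg fun i _ => abs_nonneg _
  have hx10 : 0 ≤ l1Norm x := Finset.sum_nonneg fun i _ => abs_nonneg _
  -- lower bound for l1Norm (x+h)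
  have key1 : l1Norm x - A + B ≤ l1Norm (x + h) := by
    have h1 : ∀ i ∈ S, |x i| - |h i| ≤ |x i + h i| := by
      intro i _
      have h2 := abs_add_le (x i + h i) (-h i)
      simp only [add_neg_cancel_right, abs_neg] at h2
      linarith
    have h2 : ∀ i ∈ Sᶜ, |h i| = |x i + h i| := by
      intro i hi
      have : x i = 0 := by
        by_contra hne; exact (Finset.mem_compl.mp hi) (hsupp i hne)
      simp [this]
    calc l1Norm x - A + B = ∑ i ∈ S, (|x i| - |h i|) + ∑ i ∈ Sᶜ, |h i| := by
          rw [hx1, Finset.sum_sub_distrib]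
      _ ≤ ∑ i ∈ S, |x i + h i| + ∑ i ∈ Sᶜ, |x i + h i| :=
          add_le_add (Finset.sum_le_sum h1) (le_of_eq (Finset.sum_congr rfl h2))
      _ = l1Norm (x + h) := by
          rw [l1Norm]
          exact Finset.sum_add_sum_compl S _
  -- Minkowski
  have key2 : lqNorm q (x + h) ≤ lqNorm q x + lqNorm q h := by
    have := Real.Lp_add_le Finset.univ x h hq.le
    simpa [lqNorm] using this
  -- cone inequality
  have hchain : (l1Norm x - A + B) * lqNorm q x ≤ l1Norm x * (lqNorm q x + lqNorm q h) := by
    calc (l1Norm x - A + B) * lqNorm q x ≤ l1Norm (x + h) * lqNorm q x :=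
          mul_le_mul_of_nonneg_right key1 hLx.le
      _ ≤ l1Norm x * lqNorm q (x + h) := hineq
      _ ≤ l1Norm x * (lqNorm q x + lqNorm q h) :=
          mul_le_mul_of_nonneg_left key2 hx10
  have hcone : B ≤ A + (l1Norm x / lqNorm q x) * lqNorm q h := by
    have hdle : B - A ≤ l1Norm x * lqNorm q h / lqNorm q x := by
      rw [le_div_iff₀ hLx]; nlinarith [hchain]
    have heq : l1Norm x / lqNorm q x * lqNorm q h = l1Norm x * lqNorm q h / lqNorm q x := by
      ring
    linarith
  -- sparsity power identity
  have hqs : qSparsity q x ^ (1 - 1/q) = l1Norm x / lqNorm q x := by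
    have hr : 0 ≤ l1Norm x / lqNorm q x := div_nonneg hx10 hLx.le
    rw [qSparsity, ← Real.rpow_mul hr]
    have he : q / (q-1) * (1 - 1/q) = 1 := by
      field_simp
    rw [he, Real.rpow_one]
  have goal1 : l1Norm (restr h Sᶜ) ≤ l1Norm (restr h S) + qSparsity q x ^ (1 - 1/q) * lqNorm q h := by
    rw [hS, hSc, hqs]; exact hcone
  -- Hölder over S with bound k
  have hH : ∀ z : Fin N → ℝ, (∑ i ∈ S, |z i|) ≤ k ^ (1 - 1/q) * lqNorm q z := by
    intro z
    have h1 := holder_aux hq z S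
    have h2 : ((S.card : ℝ)) ^ (1 - 1/q) * (∑ i ∈ S, |z i| ^ q) ^ (1/q)
        ≤ k ^ (1 - 1/q) * lqNorm q z := by
      apply mul_le_mul
      · exact Real.rpow_le_rpow (Nat.cast_nonneg _) hcard hexp
      · rw [lqNorm]
        apply Real.rpow_le_rpow
        · exact Finset.sum_nonneg fun i _ => Real.rpow_nonneg (abs_nonneg _) _
        · exact Finset.sum_le_sum_of_subset_of_nonneg (Finset.subset_univ S)
            (fun i _ _ => Real.rpow_nonneg (abs_nonneg _) _)
        · exact hqi.le
      · exact Real.rpow_nonneg (Finset.sum_nonneg fun i _ =>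
          Real.rpow_nonneg (abs_nonneg _) _) _
      · exact Real.rpow_nonneg hk0 _
    exact le_trans h1 h2
  have hxratio : l1Norm x / lqNorm q x ≤ k ^ (1 - 1/q) := by
    rw [div_le_iff₀ hLx]
    calc l1Norm x = ∑ i ∈ S, |x i| := hx1
      _ ≤ k ^ (1 - 1/q) * lqNorm q x := hH x
  have goal2 : l1Norm h ≤ 3 * k ^ (1 - 1/q) * lqNorm q h := by
    have hl1h : l1Norm h = A + B := (Finset.sum_add_sum_compl S _).symm
    have hAk : A ≤ k ^ (1 - 1/q) * lqNorm q h := hH h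
    have hrk : (l1Norm x / lqNorm q x) * lqNorm q h ≤ k ^ (1 - 1/q) * lqNorm q h :=
      mul_le_mul_of_nonneg_right hxratio hLh
    linarith
  refine ⟨goal1, goal2, ?_⟩
  intro hne
  obtain ⟨j0, hj0⟩ := Function.ne_iff.mp hne
  have hsumh : 0 < ∑ i, |h i| ^ q := by
    apply Finset.sum_pos' (fun i _ => Real.rpow_nonneg (abs_nonneg _) _)
    exact ⟨j0, Finset.mem_univ _, Real.rpow_pos_of_pos (abs_pos.mpr hj0) _⟩
  have hLhp : 0 < lqNorm q h := Real.rpow_pos_of_pos hsumh _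
  have hl1h0 : 0 ≤ l1Norm h := Finset.sum_nonneg fun i _ => abs_nonneg _
  have hratio : l1Norm h / lqNorm q h ≤ 3 * k ^ (1 - 1/q) := by
    rw [div_le_iff₀ hLhp]; linarith [goal2]
  have hexpq : (0:ℝ) ≤ q / (q - 1) := div_nonneg hq0.le hq1.le
  calc qSparsity q h ≤ (3 * k ^ (1 - 1/q)) ^ (q / (q-1)) :=
        Real.rpow_le_rpow (div_nonneg hl1h0 hLhp.le) hratio hexpq
    _ = 3 ^ (q / (q-1)) * k := by
        rw [Real.mul_rpow (by norm_num) (Real.rpow_nonneg hk0 _),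
          ← Real.rpow_mul hk0]
        have he : (1 - 1/q) * (q / (q-1)) = 1 := by field_simp
        rw [he, Real.rpow_one]
end

section
/- (Exactly sparse recovery error bound) Let q ∈ (1,∞), A ∈ R^{m×N}, x nonzero and k-sparse, y = Ax + ε with ‖ε‖₂ ≤ η, and let ρ = ρ_{q,3^{q/(q−1)}k}(A) := min{‖Az‖₂/‖z‖_q : z ≠ 0, s_q(z) ≤ 3^{q/(q−1)}k} > 0. If x̂ is any minimizer of ‖z‖₁/‖z‖_q subject to ‖y − Az‖₂ ≤ η, then ‖x̂ − x‖_q ≤ 2η/ρ and ‖x̂ − x‖₁ ≤ 6 k^{1−1/q} η / ρ. -/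
open Finset

lemma lqNorm_nonneg {N : ℕ} (q : ℝ) (z : Fin N → ℝ) : 0 ≤ lqNorm q z :=
  Real.rpow_nonneg (Finset.sum_nonneg fun _ _ => Real.rpow_nonneg (abs_nonneg _) _) _

lemma l1Norm_nonneg {N : ℕ} (z : Fin N → ℝ) : 0 ≤ l1Norm z :=
  Finset.sum_nonneg fun _ _ => abs_nonneg _

lemma lqNorm_pos {N : ℕ} {q : ℝ} {z : Fin N → ℝ} (hz : z ≠ 0) :
    0 < lqNorm q z := by
  obtain ⟨i, hi⟩ := Function.ne_iff.1 hz
  refine Real.rpow_pos_of_pos ?_ _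
  refine Finset.sum_pos' (fun j _ => Real.rpow_nonneg (abs_nonneg _) _) ⟨i, Finset.mem_univ i, ?_⟩
  exact Real.rpow_pos_of_pos (abs_pos.2 hi) _

lemma lqNorm_add_le {N : ℕ} {q : ℝ} (hq : 1 ≤ q) (u v : Fin N → ℝ) :
    lqNorm q (u + v) ≤ lqNorm q u + lqNorm q v :=
  Real.Lp_add_le Finset.univ u v hq

lemma holder_card {N : ℕ} {q : ℝ} (hq : 1 < q) (z : Fin N → ℝ) (S : Finset (Fin N)) {k : ℕ}
    (hk : S.card ≤ k) :
    ∑ i ∈ S, |z i| ≤ (k : ℝ) ^ (1 - 1/q) * lqNorm q z := by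
  have h1 := Real.inner_le_weight_mul_Lp_of_nonneg S hq.le (fun _ => 1) (fun i => |z i|)
      (fun _ => zero_le_one) (fun i => abs_nonneg _)
  simp only [one_mul, Finset.sum_const, nsmul_eq_mul, mul_one] at h1
  refine h1.trans ?_
  refine mul_le_mul ?_ ?_ (Real.rpow_nonneg (Finset.sum_nonneg fun i _ =>
      Real.rpow_nonneg (abs_nonneg _) _) _) (Real.rpow_nonneg (Nat.cast_nonneg _) _)
  · rw [show (1:ℝ) - 1/q = 1 - q⁻¹ by rw [one_div]]
    exact Real.rpow_le_rpow (Nat.cast_nonneg _) (Nat.cast_le.2 hk)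
      (by rw [sub_nonneg, inv_le_one_iff₀]; right; exact hq.le)
  · rw [← one_div, lqNorm]
    refine Real.rpow_le_rpow (Finset.sum_nonneg fun i _ => Real.rpow_nonneg (abs_nonneg _) _) ?_
      (by positivity)
    exact Finset.sum_le_sum_of_subset_of_nonneg (Finset.subset_univ S)
      (fun i _ _ => Real.rpow_nonneg (abs_nonneg _) _)

lemma l2Norm_eq {N : ℕ} (z : Fin N → ℝ) : l2Norm z = (∑ i, |z i| ^ (2:ℝ)) ^ ((1:ℝ)/2) := by
  rw [l2Norm, Real.sqrt_eq_rpow]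
  congr 1
  refine Finset.sum_congr rfl fun i _ => ?_
  rw [show ((2:ℝ)) = ((2:ℕ):ℝ) by norm_num, Real.rpow_natCast, sq_abs]

lemma l2Norm_add_le {N : ℕ} (u v : Fin N → ℝ) : l2Norm (u + v) ≤ l2Norm u + l2Norm v := by
  rw [l2Norm_eq, l2Norm_eq, l2Norm_eq]
  exact Real.Lp_add_le Finset.univ u v one_le_two

lemma l2Norm_sub_le {N : ℕ} (u v : Fin N → ℝ) : l2Norm (u - v) ≤ l2Norm u + l2Norm v := by
  have hn : l2Norm (-v) = l2Norm v := by simp [l2Norm]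
  calc l2Norm (u - v) = l2Norm (u + (-v)) := by rw [sub_eq_add_neg]
    _ ≤ l2Norm u + l2Norm (-v) := l2Norm_add_le u (-v)
    _ = l2Norm u + l2Norm v := by rw [hn]

theorem exactly_sparse_recovery_error_bound {m N : ℕ} (A : Matrix (Fin m) (Fin N) ℝ)
    (q : ℝ) (hq : 1 < q) (k : ℕ)
    (x : Fin N → ℝ) (hx : x ≠ 0) (hsparse : l0Norm x ≤ k)
    (ε : Fin m → ℝ) (η : ℝ) (hη : l2Norm ε ≤ η)
    (y : Fin m → ℝ) (hy : y = A.mulVec x + ε)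
    (ρ : ℝ) (hρpos : 0 < ρ)
    (hρ : ∀ z : Fin N → ℝ, z ≠ 0 → qSparsity q z ≤ (3 : ℝ) ^ (q / (q - 1)) * (k : ℝ) →
      ρ ≤ l2Norm (A.mulVec z) / lqNorm q z)
    (xh : Fin N → ℝ) (hxh : xh ≠ 0) (hfeas : l2Norm (y - A.mulVec xh) ≤ η)
    (hmin : ∀ z : Fin N → ℝ, z ≠ 0 → l2Norm (y - A.mulVec z) ≤ η →
      l1Norm xh / lqNorm q xh ≤ l1Norm z / lqNorm q z) :
    lqNorm q (xh - x) ≤ 2 * η / ρ ∧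
      l1Norm (xh - x) ≤ 6 * (k : ℝ) ^ (1 - 1 / q) * η / ρ := by
  have hq0 : (0:ℝ) < q := lt_trans one_pos hq
  have hq1 : q - 1 ≠ 0 := ne_of_gt (sub_pos.2 hq)
  have hη0 : 0 ≤ η := le_trans (Real.sqrt_nonneg _) hη
  have hK0 : (0:ℝ) ≤ (k : ℝ) ^ (1 - 1/q) := Real.rpow_nonneg (Nat.cast_nonneg _) _
  set d := xh - x with hd
  by_cases hz : d = 0
  · rw [hz]
    constructor
    · have : lqNorm q (0 : Fin N → ℝ) = 0 := by
        simp [lqNorm, Real.zero_rpow (ne_of_gt hq0),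
          Real.zero_rpow (inv_ne_zero (ne_of_gt hq0))]
      rw [this]; positivity
    · have : l1Norm (0 : Fin N → ℝ) = 0 := by simp [l1Norm]
      rw [this]; positivity
  -- main case
  set K := (k : ℝ) ^ (1 - 1/q) with hKdef
  set S := (Finset.univ.filter fun i => x i ≠ 0) with hS
  have hScard : S.card ≤ k := hsparse
  have hxS : ∀ i, i ∉ S → x i = 0 := by
    intro i hi
    by_contra hc
    exact hi (Finset.mem_filter.2 ⟨Finset.mem_univ i, hc⟩)
  have hlqx : 0 < lqNorm q x := lqNorm_pos hx
  have hlqxh : 0 < lqNorm q xh := lqNorm_pos hxh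
  have hlqd : 0 < lqNorm q d := lqNorm_pos hz
  -- x is feasible
  have hfx : l2Norm (y - A.mulVec x) ≤ η := by
    have : y - A.mulVec x = ε := by rw [hy]; abel
    rw [this]; exact hη
  have hminx := hmin x hx hfx
  -- l1 x = sum over S
  have hl1xS : l1Norm x = ∑ i ∈ S, |x i| := by
    rw [l1Norm]
    exact (Finset.sum_subset (Finset.subset_univ S)
      (fun i _ hi => by rw [hxS i hi, abs_zero])).symm
  -- c ≤ K
  have hxK : l1Norm x ≤ K * lqNorm q x := by
    rw [hl1xS]; exact holder_card hq x S hScard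
  have hcK : l1Norm x / lqNorm q x ≤ K := by
    rw [div_le_iff₀ hlqx]; exact hxK
  -- A1 : upper bound on l1 xh
  have hxh_decomp : xh = x + d := by rw [hd]; abel
  have hlq_xh_le : lqNorm q xh ≤ lqNorm q x + lqNorm q d := by
    rw [hxh_decomp]; exact lqNorm_add_le hq.le x d
  have hA1 : l1Norm xh ≤ l1Norm x + (l1Norm x / lqNorm q x) * lqNorm q d := by
    have h1 : l1Norm xh ≤ (l1Norm x / lqNorm q x) * lqNorm q xh := by
      rw [← div_le_iff₀ hlqxh]; exact hminx
    have h2 : (l1Norm x / lqNorm q x) * lqNorm q xh ≤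
        (l1Norm x / lqNorm q x) * (lqNorm q x + lqNorm q d) :=
      mul_le_mul_of_nonneg_left hlq_xh_le (div_nonneg (l1Norm_nonneg x) hlqx.le)
    have h3 : (l1Norm x / lqNorm q x) * lqNorm q x = l1Norm x :=
      div_mul_cancel₀ _ hlqx.ne'
    calc l1Norm xh ≤ (l1Norm x / lqNorm q x) * (lqNorm q x + lqNorm q d) := h1.trans h2
      _ = l1Norm x + (l1Norm x / lqNorm q x) * lqNorm q d := by rw [mul_add, h3]
  have hcd : (l1Norm x / lqNorm q x) * lqNorm q d ≤ K * lqNorm q d :=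
    mul_le_mul_of_nonneg_right hcK hlqd.le
  -- A2 : lower bound on l1 xh
  have hsplit_xh : ∑ i ∈ S, |xh i| + ∑ i ∈ Sᶜ, |xh i| = l1Norm xh :=
    Finset.sum_add_sum_compl S _
  have hsplit_d : ∑ i ∈ S, |d i| + ∑ i ∈ Sᶜ, |d i| = l1Norm d :=
    Finset.sum_add_sum_compl S _
  have hcompl : ∑ i ∈ Sᶜ, |xh i| = ∑ i ∈ Sᶜ, |d i| := by
    refine Finset.sum_congr rfl fun i hi => ?_
    have hxi : x i = 0 := hxS i (Finset.mem_compl.1 hi)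
    have : d i = xh i := by simp [hd, hxi]
    rw [this]
  have hSlow : ∑ i ∈ S, |x i| - ∑ i ∈ S, |d i| ≤ ∑ i ∈ S, |xh i| := by
    rw [← Finset.sum_sub_distrib]
    refine Finset.sum_le_sum fun i _ => ?_
    have hxi : x i = xh i - d i := by simp [hd]
    have h5 : |x i| ≤ |xh i| + |d i| := hxi ▸ abs_sub (xh i) (d i)
    linarith
  have hA3 : ∑ i ∈ S, |d i| ≤ K * lqNorm q d := holder_card hq d S hScard
  -- combine:
  have hl1d : l1Norm d ≤ 3 * K * lqNorm q d := by
    have e1 : ∑ i ∈ S, |x i| - ∑ i ∈ S, |d i| + ∑ i ∈ Sᶜ, |d i| ≤ l1Norm xh := by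
      rw [← hsplit_xh, ← hcompl]; linarith [hSlow]
    rw [← hl1xS] at e1
    have := hA1
    linarith [hsplit_d, hcd]
  -- sparsity of d
  have hsp : qSparsity q d ≤ (3 : ℝ) ^ (q / (q - 1)) * (k : ℝ) := by
    rw [qSparsity]
    have hr0 : 0 ≤ q / (q - 1) := div_nonneg hq0.le (sub_pos.2 hq).le
    have hratio : l1Norm d / lqNorm q d ≤ 3 * K := by
      rw [div_le_iff₀ hlqd]; linarith [hl1d]
    have h1 : (l1Norm d / lqNorm q d) ^ (q / (q - 1)) ≤ (3 * K) ^ (q / (q - 1)) :=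
      Real.rpow_le_rpow (div_nonneg (l1Norm_nonneg d) hlqd.le) hratio hr0
    refine h1.trans (le_of_eq ?_)
    rw [Real.mul_rpow (by norm_num) hK0, hKdef, ← Real.rpow_mul (Nat.cast_nonneg k)]
    congr 1
    rw [show (1 - 1/q) * (q / (q-1)) = 1 by field_simp, Real.rpow_one]
  -- apply CMSV
  have hρd := hρ d hz hsp
  have hAd : l2Norm (A.mulVec d) ≤ 2 * η := by
    have heq : A.mulVec d = (y - A.mulVec x) - (y - A.mulVec xh) := by
      rw [hd, Matrix.mulVec_sub]; abel
    rw [heq]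
    calc l2Norm ((y - A.mulVec x) - (y - A.mulVec xh))
        ≤ l2Norm (y - A.mulVec x) + l2Norm (y - A.mulVec xh) := l2Norm_sub_le _ _
      _ ≤ η + η := add_le_add hfx hfeas
      _ = 2 * η := by ring
  have hlqd_le : lqNorm q d ≤ 2 * η / ρ := by
    rw [le_div_iff₀ hρpos]
    calc lqNorm q d * ρ = ρ * lqNorm q d := mul_comm _ _
      _ ≤ l2Norm (A.mulVec d) := by
          rw [le_div_iff₀ hlqd] at hρd; exact hρd
      _ ≤ 2 * η := hAd
  refine ⟨hlqd_le, ?_⟩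
  calc l1Norm d ≤ 3 * K * lqNorm q d := hl1d
    _ ≤ 3 * K * (2 * η / ρ) := mul_le_mul_of_nonneg_left hlqd_le (by positivity)
    _ = 6 * K * η / ρ := by ring
end

section
/- (Parametric characterization) Let q ∈ (1,∞), let D = {z : ‖y − Az‖₂ ≤ η} be nonempty with 0 ∉ D (all feasible points nonzero), let x̄ minimize ‖z‖₁/‖z‖_q over D, and set λ̄ = ‖x̄‖_q/‖x̄‖₁, F(λ) = inf_{z∈D}(λ‖z‖₁ − ‖z‖_q). Then F(λ) < 0 if λ < λ̄, F(λ̄) = 0, and F(λ) > 0 implies λ > λ̄; moreover F(λ) < 0 implies λ < λ̄. -/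
open Finset

lemma l1_pos {N : ℕ} {z : Fin N → ℝ} (hz : z ≠ 0) : 0 < l1Norm z := by
  obtain ⟨i, hi⟩ := Function.ne_iff.mp hz
  exact Finset.sum_pos' (fun j _ => abs_nonneg _) ⟨i, Finset.mem_univ i, abs_pos.mpr hi⟩

lemma lq_pos {N : ℕ} (q : ℝ) {z : Fin N → ℝ} (hz : z ≠ 0) :
    0 < lqNorm q z := by
  obtain ⟨i, hi⟩ := Function.ne_iff.mp hz
  exact Real.rpow_pos_of_pos (Finset.sum_pos'
    (fun j _ => Real.rpow_nonneg (abs_nonneg _) q)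
    ⟨i, Finset.mem_univ i, Real.rpow_pos_of_pos (abs_pos.mpr hi) q⟩) _

theorem parametric_characterization {m N : ℕ} (A : Matrix (Fin m) (Fin N) ℝ)
    (y : Fin m → ℝ) (η : ℝ) (q : ℝ) (hq : 1 < q)
    (D : Set (Fin N → ℝ)) (hD : D = {z | l2Norm (y - A.mulVec z) ≤ η})
    (hDne : D.Nonempty) (hD0 : (0 : Fin N → ℝ) ∉ D)
    (xbar : Fin N → ℝ) (hxbar : xbar ∈ D)
    (hxbarmin : ∀ z ∈ D, l1Norm xbar / lqNorm q xbar ≤ l1Norm z / lqNorm q z)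
    (lambar : ℝ) (hlambar : lambar = lqNorm q xbar / l1Norm xbar)
    (F : ℝ → ℝ)
    (hF : ∀ lam : ℝ, ∃ z ∈ D, F lam = lam * l1Norm z - lqNorm q z ∧
      ∀ w ∈ D, F lam ≤ lam * l1Norm w - lqNorm q w) :
    (∀ lam : ℝ, lam < lambar → F lam < 0) ∧
    F lambar = 0 ∧
    (∀ lam : ℝ, 0 < F lam → lambar < lam) ∧
    (∀ lam : ℝ, F lam < 0 → lam < lambar) := by
  have hne : ∀ z ∈ D, z ≠ 0 := fun z hz h0 => hD0 (h0 ▸ hz)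
  have hx1 : 0 < l1Norm xbar := l1_pos (hne _ hxbar)
  have hxq : 0 < lqNorm q xbar := lq_pos q (hne _ hxbar)
  -- key: for all z ∈ D, lqNorm q z ≤ lambar * l1Norm z
  have key : ∀ z ∈ D, lqNorm q z ≤ lambar * l1Norm z := by
    intro z hz
    have h1 : 0 < l1Norm z := l1_pos (hne _ hz)
    have hqz : 0 < lqNorm q z := lq_pos q (hne _ hz)
    have h := hxbarmin z hz
    rw [div_le_div_iff₀ hxq hqz] at h
    rw [hlambar, div_mul_eq_mul_div, le_div_iff₀ hx1]
    nlinarith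
  have keyx : lqNorm q xbar = lambar * l1Norm xbar := by
    rw [hlambar]; field_simp
  -- F lambar = 0
  have hF0 : F lambar = 0 := by
    obtain ⟨z, hz, hzeq, hzmin⟩ := hF lambar
    have h1 := key z hz
    have h2 := hzmin xbar hxbar
    rw [keyx] at h2
    linarith [hzeq ▸ (by linarith : lambar * l1Norm z - lqNorm q z ≥ 0)]
  have upper : ∀ lam : ℝ, F lam ≤ (lam - lambar) * l1Norm xbar := by
    intro lam
    obtain ⟨z, hz, hzeq, hzmin⟩ := hF lam
    have := hzmin xbar hxbar
    rw [keyx] at this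
    linarith
  have lower : ∀ lam : ℝ, lambar ≤ lam → 0 ≤ F lam := by
    intro lam hlam
    obtain ⟨z, hz, hzeq, _⟩ := hF lam
    have h1 := key z hz
    have h2 : 0 < l1Norm z := l1_pos (hne _ hz)
    rw [hzeq]
    nlinarith
  refine ⟨fun lam hlam => ?_, hF0, fun lam h => ?_, fun lam h => ?_⟩
  · have := upper lam
    nlinarith
  · by_contra hc
    push_neg at hc
    have := upper lam
    nlinarith
  · by_contra hc
    push_neg at hc
    exact absurd (lower lam hc) (by linarith)
end
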